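/- arXiv:1406.1102 — 5 statements merged into one kernel-verified Lean document; each statement's English description precedes it below -/
import Mathlib

section
/- Let f(w) = (1/n)∑ᵢ fᵢ(w) with each fᵢ convex differentiable with Lᵢ-Lipschitz gradient, let W ⊆ ℝ^d be convex, let w* minimize f over W, let p₁,…,pₙ ∈ (0,1) with ∑ pᵢ = 1 and L_P = maxᵢ [Lᵢ/(n pᵢ)]. Then for all w ∈ W: (1/n)∑ᵢ (1/(n pᵢ)) ‖∇fᵢ(w) − ∇fᵢ(w*)‖² ≤ 2 L_P (f(w) − f(w*)). -/
open RealInnerProductSpace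

/-!
For convex `g` with `L`-Lipschitz gradient, the Bregman divergence
`bregman g x y = g x - g y - ⟪∇g y, x - y⟫` dominates `‖∇g x - ∇g y‖² / (2L)`: compare the
first-order lower bound at `y` with the quadratic upper bound at `x`, both evaluated at
`x - (∇g x - ∇g y) / L`. Weighting the `i`-th inequality by `1 / (n pᵢ)` and using
`Lᵢ / (n pᵢ) ≤ L_P` bounds the left side by `2 L_P · bregman f w w*`, because the Bregman
divergence is linear in the function. Finally `bregman f w w* ≤ f w - f w*`, since
`⟪∇f w*, w - w*⟫ ≥ 0` at a minimizer of `f` over the convex set `W`.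
-/

lemma nonneg_of_norm_sub_le_mul {E G : Type*} [NormedAddCommGroup E] [Nontrivial E]
    [SeminormedAddCommGroup G] {F : E → G} {L : ℝ} (hF : ∀ a b, ‖F a - F b‖ ≤ L * ‖a - b‖) :
    0 ≤ L := by
  obtain ⟨a, b, hab⟩ := exists_pair_ne E
  exact nonneg_of_mul_nonneg_left ((norm_nonneg _).trans (hF a b))
    (norm_pos_iff.2 (sub_ne_zero.2 hab))

section Bregman

variable {E : Type*} [NormedAddCommGroup E] [InnerProductSpace ℝ E] [CompleteSpace E]

open AffineMap in
lemma hasDerivAt_comp_lineMap {g : E → ℝ} {x y : E} {t : ℝ}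
    (hg : DifferentiableAt ℝ g (lineMap x y t)) :
    HasDerivAt (fun s => g (lineMap x y s)) ⟪gradient g (lineMap x y t), y - x⟫ t := by
  rw [inner_gradient_left]
  exact hg.hasFDerivAt.comp_hasDerivAt t hasDerivAt_lineMap

noncomputable def bregman (g : E → ℝ) (x y : E) : ℝ := g x - g y - ⟪gradient g y, x - y⟫

open AffineMap in
lemma ConvexOn.bregman_nonneg {g : E → ℝ} (hconv : ConvexOn ℝ Set.univ g) {x y : E}
    (hg : DifferentiableAt ℝ g y) : 0 ≤ bregman g x y := by
  have hline : ConvexOn ℝ Set.univ (fun s => g (lineMap y x s)) :=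
    hconv.comp_affineMap (lineMap y x)
  have hslope := hline.le_slope_of_hasDerivAt (Set.mem_univ 0) (Set.mem_univ 1) one_pos
    (hasDerivAt_comp_lineMap (by simpa using hg))
  simp only [slope_def_field, lineMap_apply_zero, lineMap_apply_one, sub_zero, div_one] at hslope
  unfold bregman
  linarith

open AffineMap in
lemma bregman_le_of_lipschitz_gradient {g : E → ℝ} (hg : Differentiable ℝ g) {L : ℝ}
    (hlip : ∀ a b, ‖gradient g a - gradient g b‖ ≤ L * ‖a - b‖) (x y : E) :
    bregman g y x ≤ L / 2 * ‖y - x‖ ^ 2 := by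
  set v := y - x
  set h : ℝ → ℝ := fun t => g (lineMap x y t) - t * ⟪gradient g x, v⟫ - L / 2 * t ^ 2 * ‖v‖ ^ 2
  have hder : ∀ t, HasDerivAt h
      (⟪gradient g (lineMap x y t) - gradient g x, v⟫ - L * t * ‖v‖ ^ 2) t := by
    intro t
    have := (((hasDerivAt_comp_lineMap (x := x) (y := y) (hg _)).sub ((hasDerivAt_id t).mul_const
      ⟪gradient g x, v⟫)).sub (((hasDerivAt_pow 2 t).const_mul (L / 2)).mul_const (‖v‖ ^ 2)))
    refine this.congr_deriv ?_
    rw [inner_sub_left]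
    ring
  have hanti : AntitoneOn h (Set.Icc 0 1) := by
    refine antitoneOn_of_hasDerivWithinAt_nonpos (convex_Icc 0 1)
      (HasDerivAt.continuousOn fun t _ => hder t) (fun t _ => (hder t).hasDerivWithinAt) ?_
    intro t ht
    rw [interior_Icc] at ht
    have hdist : ‖lineMap x y t - x‖ = t * ‖v‖ := by
      rw [← dist_eq_norm, dist_lineMap_left, Real.norm_of_nonneg ht.1.le, dist_comm,
        dist_eq_norm]
    refine sub_nonpos.2 ?_
    calc ⟪gradient g (lineMap x y t) - gradient g x, v⟫
        ≤ ‖gradient g (lineMap x y t) - gradient g x‖ * ‖v‖ := real_inner_le_norm _ _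
      _ ≤ L * ‖lineMap x y t - x‖ * ‖v‖ := by gcongr; exact hlip _ _
      _ = L * t * ‖v‖ ^ 2 := by rw [hdist]; ring
  have h10 := hanti (by simp) (by simp) zero_le_one
  simp only [h, lineMap_apply_zero, lineMap_apply_one] at h10
  unfold bregman
  linarith

lemma norm_sub_gradient_sq_le_bregman {g : E → ℝ} (hconv : ConvexOn ℝ Set.univ g)
    (hg : Differentiable ℝ g) {L : ℝ} (hL : 0 ≤ L)
    (hlip : ∀ a b, ‖gradient g a - gradient g b‖ ≤ L * ‖a - b‖) (x y : E) :
    ‖gradient g x - gradient g y‖ ^ 2 ≤ 2 * L * bregman g x y := by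
  rcases hL.eq_or_lt with rfl | hL
  · have : gradient g x - gradient g y = 0 := norm_le_zero_iff.1 (by simpa using hlip x y)
    simp [this]
  set u := gradient g x - gradient g y
  set z := x - L⁻¹ • u
  have hconvex := hconv.bregman_nonneg (x := z) (hg y)
  have hsmooth := bregman_le_of_lipschitz_gradient hg hlip x z
  have hzx : z - x = -(L⁻¹ • u) := by simp [z]
  have hzy : z - y = (x - y) - L⁻¹ • u := by simp only [z]; abel
  have hu : ⟪gradient g x, u⟫ - ⟪gradient g y, u⟫ = ‖u‖ ^ 2 := by
    rw [← inner_sub_left, real_inner_self_eq_norm_sq]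
  unfold bregman at *
  rw [hzy, inner_sub_right, real_inner_smul_right] at hconvex
  rw [hzx, inner_neg_right, real_inner_smul_right, norm_neg, norm_smul, Real.norm_of_nonneg
    (inv_nonneg.2 hL.le)] at hsmooth
  have key : L⁻¹ * ‖u‖ ^ 2 ≤ L / 2 * (L⁻¹ * ‖u‖) ^ 2 + (g x - g y - ⟪gradient g y, x - y⟫) := by
    rw [← hu]; linarith
  have hLinv : L * L⁻¹ = 1 := mul_inv_cancel₀ hL.ne'
  linear_combination (2 * L) * key + (‖u‖ ^ 2 * (L * L⁻¹ - 1)) * hLinv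

lemma mul_norm_sub_gradient_sq_le_bregman {g : E → ℝ} (hconv : ConvexOn ℝ Set.univ g)
    (hg : Differentiable ℝ g) {L c M : ℝ} (hL : 0 ≤ L) (hc : 0 ≤ c) (hcL : c * L ≤ M)
    (hlip : ∀ a b, ‖gradient g a - gradient g b‖ ≤ L * ‖a - b‖) (x y : E) :
    c * ‖gradient g x - gradient g y‖ ^ 2 ≤ 2 * M * bregman g x y :=
  calc _ ≤ c * (2 * L * bregman g x y) :=
        mul_le_mul_of_nonneg_left (norm_sub_gradient_sq_le_bregman hconv hg hL hlip x y) hc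
    _ = 2 * (c * L) * bregman g x y := by ring
    _ ≤ 2 * M * bregman g x y := by
        gcongr
        exact hconv.bregman_nonneg (hg y)

lemma hasGradientAt_const_mul_sum {ι : Type*} [Fintype ι] (c : ℝ) {g : ι → E → ℝ} {x : E}
    (hg : ∀ i, DifferentiableAt ℝ (g i) x) :
    HasGradientAt (fun y => c * ∑ i, g i y) (c • ∑ i, gradient (g i) x) x := by
  rw [hasGradientAt_iff_hasFDerivAt]
  simp only [map_smul, map_sum, toDual_gradient]
  exact (HasFDerivAt.fun_sum fun i _ => (hg i).hasFDerivAt).const_mul c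

lemma bregman_const_mul_sum {ι : Type*} [Fintype ι] (c : ℝ) {g : ι → E → ℝ} {x y : E}
    (hg : ∀ i, DifferentiableAt ℝ (g i) y) :
    bregman (fun z => c * ∑ i, g i z) x y = c * ∑ i, bregman (g i) x y := by
  simp only [bregman, (hasGradientAt_const_mul_sum c hg).gradient, real_inner_smul_left,
    sum_inner, Finset.sum_sub_distrib]
  ring

lemma IsMinOn.inner_gradient_nonneg {g : E → ℝ} {W : Set E} {x y : E} (hmin : IsMinOn g W x)
    (hW : Convex ℝ W) (hx : x ∈ W) (hy : y ∈ W) (hg : DifferentiableAt ℝ g x) :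
    0 ≤ ⟪gradient g x, y - x⟫ := by
  rw [inner_gradient_left]
  exact hmin.localize.hasFDerivWithinAt_nonneg hg.hasFDerivAt.hasFDerivWithinAt
    (sub_mem_posTangentConeAt_of_segment_subset (hW.segment_subset hx hy))

end Bregman

theorem stmt_5_general (d n : ℕ)
    (fi : Fin n → EuclideanSpace ℝ (Fin d) → ℝ) (Li p : Fin n → ℝ)
    (hconv : ∀ i, ConvexOn ℝ Set.univ (fi i)) (hdiff : ∀ i, Differentiable ℝ (fi i))
    (hlip : ∀ i, ∀ x y, ‖gradient (fi i) x - gradient (fi i) y‖ ≤ Li i * ‖x - y‖)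
    (f : EuclideanSpace ℝ (Fin d) → ℝ)
    (hf : ∀ w, f w = (1 / (n : ℝ)) * ∑ i, fi i w)
    (W : Set (EuclideanSpace ℝ (Fin d))) (hW : Convex ℝ W)
    (wstar : EuclideanSpace ℝ (Fin d)) (hws : wstar ∈ W)
    (hmin : ∀ w ∈ W, f wstar ≤ f w)
    (hp : ∀ i, p i ∈ Set.Ioo (0 : ℝ) 1)
    (LP : ℝ) (hLP : IsGreatest {x : ℝ | ∃ i, x = Li i / ((n : ℝ) * p i)} LP) :
    ∀ w ∈ W, (1 / (n : ℝ)) * ∑ i, (1 / ((n : ℝ) * p i)) *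
        ‖gradient (fi i) w - gradient (fi i) wstar‖ ^ 2
      ≤ 2 * LP * (f w - f wstar) := by
  intro w hw
  -- for `w ≠ wstar` the space is nontrivial, so `hlip` forces `Li i ≥ 0`
  rcases eq_or_ne w wstar with rfl | hne
  · simp
  have : Nontrivial (EuclideanSpace ℝ (Fin d)) := nontrivial_of_ne w wstar hne
  have hfeq : f = fun z => (1 / (n : ℝ)) * ∑ i, fi i z := funext hf
  have hLi (i : Fin n) : 0 ≤ Li i := nonneg_of_norm_sub_le_mul (hlip i)
  have hweight (i : Fin n) : 0 < (n : ℝ) * p i := mul_pos (Nat.cast_pos.2 i.pos) (hp i).1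
  have hLP_nonneg : 0 ≤ LP := by
    obtain ⟨i, rfl⟩ := hLP.1
    exact div_nonneg (hLi i) (hweight i).le
  have hterm (i : Fin n) : 1 / ((n : ℝ) * p i) * ‖gradient (fi i) w - gradient (fi i) wstar‖ ^ 2
      ≤ 2 * LP * bregman (fi i) w wstar :=
    mul_norm_sub_gradient_sq_le_bregman (hconv i) (hdiff i) (hLi i)
      (one_div_pos.2 (hweight i)).le (by rw [one_div_mul_eq_div]; exact hLP.2 ⟨i, rfl⟩)
      (hlip i) w wstar
  have hopt : 0 ≤ ⟪gradient f wstar, w - wstar⟫ := by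
    refine (isMinOn_iff.2 hmin).inner_gradient_nonneg hW hws hw ?_
    rw [hfeq]
    exact (hasGradientAt_const_mul_sum _ fun i => hdiff i wstar).differentiableAt
  calc _ ≤ (1 / (n : ℝ)) * ∑ i, 2 * LP * bregman (fi i) w wstar :=
        mul_le_mul_of_nonneg_left (Finset.sum_le_sum fun i _ => hterm i) (by positivity)
    _ = 2 * LP * bregman f w wstar := by
        rw [hfeq, bregman_const_mul_sum _ fun i => hdiff i wstar, ← Finset.mul_sum]
        ring
    _ ≤ 2 * LP * (f w - f wstar) := by
        gcongr
        unfold bregman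
        linarith

/-- For `f = (1/n)∑ᵢ fᵢ` (each `fᵢ` convex differentiable with `Lᵢ`-Lipschitz
gradient), `W` convex, `w*` a minimizer of `f` over `W`, probability weights `pᵢ` and
`L_P = maxᵢ Lᵢ/(n pᵢ)`, for all `w ∈ W`:
`(1/n)∑ᵢ (1/(n pᵢ)) ‖∇fᵢ(w) − ∇fᵢ(w*)‖² ≤ 2 L_P (f(w) − f(w*))`. -/
theorem stmt_5 (d n : ℕ) (hn : 0 < n)
    (fi : Fin n → EuclideanSpace ℝ (Fin d) → ℝ) (Li p : Fin n → ℝ)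
    (hconv : ∀ i, ConvexOn ℝ Set.univ (fi i)) (hdiff : ∀ i, Differentiable ℝ (fi i))
    (hlip : ∀ i, ∀ x y, ‖gradient (fi i) x - gradient (fi i) y‖ ≤ Li i * ‖x - y‖)
    (f : EuclideanSpace ℝ (Fin d) → ℝ)
    (hf : ∀ w, f w = (1 / (n : ℝ)) * ∑ i, fi i w)
    (W : Set (EuclideanSpace ℝ (Fin d))) (hW : Convex ℝ W)
    (wstar : EuclideanSpace ℝ (Fin d)) (hws : wstar ∈ W)
    (hmin : ∀ w ∈ W, f wstar ≤ f w)
    (hp : ∀ i, p i ∈ Set.Ioo (0 : ℝ) 1) (hsum : ∑ i, p i = 1)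
    (LP : ℝ) (hLP : IsGreatest {x : ℝ | ∃ i, x = Li i / ((n : ℝ) * p i)} LP) :
    ∀ w ∈ W, (1 / (n : ℝ)) * ∑ i, (1 / ((n : ℝ) * p i)) *
        ‖gradient (fi i) w - gradient (fi i) wstar‖ ^ 2
      ≤ 2 * LP * (f w - f wstar) :=
  stmt_5_general d n fi Li p hconv hdiff hlip f hf W hW wstar hws hmin hp LP hLP
end

section
/- Semi-strong convexity for constrained problems: Under assumptions that f(w) = h(Xw) + qᵀw with h strongly convex (modulus μ > 0) on relevant compact convex sets, W = {w : Cw ≤ b} a compact polyhedron with nonempty optimal set W*, and the Hoffman inequality ‖w − w'‖ ≤ θ‖( [Cw−b]⁺ ; Xw − r* ; qᵀw − s* )‖ holding for the polyhedron W* = {w : Cw ≤ b, Xw = r*, qᵀw = s*} with some projection point w' ∈ W*, there exists β > 0 such that for every w ∈ W: f(w) − f* ≥ (β/2)‖w − Π_{W*}(w)‖², where Π_{W*} is Euclidean projection onto W* and f* is the optimal value. -/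
/-!
Let `w* ∈ W*` be the Hoffman point of `w ∈ W`, and write `v = Aw − r*`, `t = ⟪q, w⟫ − s*`,
`g = ∇h(r*)` and `D = f(w) − f*`. Optimality of `w*` over the convex set `W` gives the variational
inequality `⟪g, v⟫ + t ≥ 0`, and strong convexity of `h` between `Aw*` and `Aw` gives
`D ≥ ⟪g, v⟫ + t + μ‖v‖²/2`. Hence `‖v‖² ≤ 2D/μ`, and `|t| ≤ D + ‖g‖‖v‖` together with `D ≤ M`
bounds `t²` by a multiple of `D` as well. The Hoffman inequality turns the resulting bound on
`‖v‖² + t²` into one on `‖w − w*‖² ≥ ‖w − Π_{W*}(w)‖²`.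
-/

open RealInnerProductSpace

theorem IsMinOn.inner_gradient_comp_add_inner_nonneg
    {E F : Type*} [NormedAddCommGroup E] [InnerProductSpace ℝ E]
    [NormedAddCommGroup F] [InnerProductSpace ℝ F] [CompleteSpace F]
    {h : F → ℝ} {A : E →L[ℝ] F} {q : E} {S : Set E} {x y : E}
    (hmin : IsMinOn (fun w ↦ h (A w) + ⟪q, w⟫) S x) (hS : Convex ℝ S) (hx : x ∈ S) (hy : y ∈ S)
    (hh : DifferentiableAt ℝ h (A x)) :
    0 ≤ ⟪gradient h (A x), A y - A x⟫ + (⟪q, y⟫ - ⟪q, x⟫) := by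
  have hderiv : HasFDerivAt (fun w ↦ h (A w) + ⟪q, w⟫)
      ((InnerProductSpace.toDual ℝ F (gradient h (A x))).comp A + innerSL ℝ q) x :=
    (hh.hasGradientAt.hasFDerivAt.comp x A.hasFDerivAt).add (innerSL ℝ q).hasFDerivAt
  have := hmin.localize.hasFDerivWithinAt_nonneg hderiv.hasFDerivWithinAt
    (sub_mem_posTangentConeAt_of_segment_subset (hS.segment_subset hx hy))
  simp only [add_apply, ContinuousLinearMap.comp_apply, InnerProductSpace.toDual_apply_apply,
    innerSL_apply_apply, map_sub] at this
  rw [inner_sub_right]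
  linarith

/-- In the application `D = f(w) − f*`, `a = ‖Aw − r*‖`, `p = ⟪∇h(r*), Aw − r*⟫`,
`t = ⟪q, w⟫ − s*` and `G = ‖∇h(r*)‖`. -/
theorem sq_add_sq_le_of_gap_bounds {μ G M D a p t : ℝ} (hμ : 0 < μ) (hp : |p| ≤ G * a)
    (hvar : 0 ≤ p + t) (hsc : p + t + μ / 2 * a ^ 2 ≤ D) (hDM : D ≤ M) :
    a ^ 2 + t ^ 2 ≤ 2 * D * ((1 + 2 * G ^ 2) / μ + M) := by
  obtain ⟨hp_lo, hp_hi⟩ := abs_le.mp hp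
  have ha : a ^ 2 ≤ 2 * D / μ := by rw [le_div_iff₀ hμ]; linarith
  have hsq : 0 ≤ μ / 2 * a ^ 2 := by positivity
  have hD : 0 ≤ D := by linarith
  have ht : t ^ 2 ≤ 2 * (D * M + G ^ 2 * (2 * D / μ)) := calc
    t ^ 2 ≤ (D + G * a) ^ 2 := sq_le_sq' (by linarith) (by linarith)
    _ ≤ 2 * (D ^ 2 + (G * a) ^ 2) := add_sq_le
    _ ≤ 2 * (D * M + G ^ 2 * (2 * D / μ)) := by
      rw [sq D, mul_pow]; gcongr
  calc a ^ 2 + t ^ 2 ≤ 2 * D / μ + 2 * (D * M + G ^ 2 * (2 * D / μ)) := add_le_add ha ht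
    _ = 2 * D * ((1 + 2 * G ^ 2) / μ + M) := by field_simp; ring

theorem stmt_10_general (d n : ℕ)
    (h : EuclideanSpace ℝ (Fin n) → ℝ) (hdiff : Differentiable ℝ h)
    (A : EuclideanSpace ℝ (Fin d) →L[ℝ] EuclideanSpace ℝ (Fin n))
    (q : EuclideanSpace ℝ (Fin d))
    (f : EuclideanSpace ℝ (Fin d) → ℝ)
    (hf : ∀ w, f w = h (A w) + ⟪q, w⟫)
    (W : Set (EuclideanSpace ℝ (Fin d))) (hWconv : Convex ℝ W)
    (rstar : EuclideanSpace ℝ (Fin n)) (sstar fstar : ℝ)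
    (Wstar : Set (EuclideanSpace ℝ (Fin d)))
    (hWstar : Wstar = {w ∈ W | A w = rstar ∧ ⟪q, w⟫ = sstar})
    (hopt : ∀ w ∈ Wstar, f w = fstar ∧ ∀ u ∈ W, fstar ≤ f u)
    (μ : ℝ) (hμ : 0 < μ)
    (hsc : ∀ w ∈ W, ∀ w' ∈ W,
      h (A w) ≥ h (A w') + ⟪gradient h (A w'), A w - A w'⟫ + μ / 2 * ‖A w - A w'‖ ^ 2)
    (θ : ℝ)
    (hhoffman : ∀ w ∈ W, ∃ wst ∈ Wstar,
      ‖w - wst‖ ^ 2 ≤ θ ^ 2 * (‖A w - rstar‖ ^ 2 + (⟪q, w⟫ - sstar) ^ 2))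
    (M : ℝ) (hMb : ∀ w ∈ W, f w - fstar ≤ M)
    (proj : EuclideanSpace ℝ (Fin d) → EuclideanSpace ℝ (Fin d))
    (hproj : ∀ w, proj w ∈ Wstar ∧ ∀ u ∈ Wstar, ‖w - proj w‖ ≤ ‖w - u‖)
    (β : ℝ) (hβ : β = 1 / (θ ^ 2 * ((1 + 2 * ‖gradient h rstar‖ ^ 2) / μ + M))) :
    ∀ w ∈ W, f w - fstar ≥ β / 2 * ‖w - proj w‖ ^ 2 := by
  subst hWstar
  intro w hw
  obtain ⟨wst, hwst, hhof⟩ := hhoffman w hw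
  obtain ⟨hfwst, hmin⟩ := hopt wst hwst
  obtain ⟨hwstW, hAwst, hqwst⟩ := hwst
  have hmin' : IsMinOn (fun u ↦ h (A u) + ⟪q, u⟫) W wst := fun u hu ↦ by
    simpa [← hf, hfwst] using hmin u hu
  have hvar := hmin'.inner_gradient_comp_add_inner_nonneg hWconv hwstW hw (hdiff _)
  rw [hAwst, hqwst] at hvar
  have hgap : ⟪gradient h rstar, A w - rstar⟫ + (⟪q, w⟫ - sstar) + μ / 2 * ‖A w - rstar‖ ^ 2
      ≤ f w - fstar := by
    have := hsc w hw wst hwstW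
    rw [hAwst] at this
    rw [← hfwst, hf, hf, hAwst, hqwst]
    linarith
  have hres := sq_add_sq_le_of_gap_bounds hμ (abs_real_inner_le_norm _ _) hvar hgap (hMb w hw)
  set K := (1 + 2 * ‖gradient h rstar‖ ^ 2) / μ + M
  have hgap_nonneg : 0 ≤ f w - fstar := sub_nonneg.mpr (hmin w hw)
  have hK : 0 ≤ K := by have : 0 ≤ M := hgap_nonneg.trans (hMb w hw); positivity
  have hβ0 : 0 ≤ β := hβ ▸ one_div_nonneg.mpr (mul_nonneg (sq_nonneg θ) hK)
  calc β / 2 * ‖w - proj w‖ ^ 2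
      ≤ β / 2 * ‖w - wst‖ ^ 2 := by gcongr; exact (hproj w).2 wst ⟨hwstW, hAwst, hqwst⟩
    _ ≤ β / 2 * (θ ^ 2 * (‖A w - rstar‖ ^ 2 + (⟪q, w⟫ - sstar) ^ 2)) := by gcongr
    _ ≤ β / 2 * (θ ^ 2 * (2 * (f w - fstar) * K)) := by gcongr
    _ = (θ ^ 2 * K) * (θ ^ 2 * K)⁻¹ * (f w - fstar) := by rw [hβ]; ring
    _ ≤ f w - fstar := mul_le_of_le_one_left hgap_nonneg mul_inv_le_one

/-- Semi-strong convexity for constrained problems. Under strong convexity of `h`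
(modulus `μ`) on the relevant set, a compact convex feasible set `W` with nonempty optimal set
`W* = {w ∈ W : Aw = r*, ⟨q,w⟩ = s*}`, the Hoffman inequality, the bound `M`, and
`β = 1/(θ²((1 + 2‖∇h(r*)‖²)/μ + M))`, for every `w ∈ W`:
`f(w) − f* ≥ (β/2)‖w − Π_{W*}(w)‖²`. -/
theorem stmt_10 (d n : ℕ)
    (h : EuclideanSpace ℝ (Fin n) → ℝ) (hdiff : Differentiable ℝ h)
    (A : EuclideanSpace ℝ (Fin d) →L[ℝ] EuclideanSpace ℝ (Fin n))
    (q : EuclideanSpace ℝ (Fin d))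
    (f : EuclideanSpace ℝ (Fin d) → ℝ)
    (hf : ∀ w, f w = h (A w) + ⟪q, w⟫)
    (W : Set (EuclideanSpace ℝ (Fin d))) (hWconv : Convex ℝ W) (hWcomp : IsCompact W)
    (rstar : EuclideanSpace ℝ (Fin n)) (sstar fstar : ℝ)
    (Wstar : Set (EuclideanSpace ℝ (Fin d)))
    (hWstar : Wstar = {w ∈ W | A w = rstar ∧ ⟪q, w⟫ = sstar})
    (hWstarne : Wstar.Nonempty)
    (hopt : ∀ w ∈ Wstar, f w = fstar ∧ ∀ u ∈ W, fstar ≤ f u)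
    (μ : ℝ) (hμ : 0 < μ)
    (hsc : ∀ w ∈ W, ∀ w' ∈ W,
      h (A w) ≥ h (A w') + ⟪gradient h (A w'), A w - A w'⟫ + μ / 2 * ‖A w - A w'‖ ^ 2)
    (θ : ℝ) (hθ : 0 < θ)
    (hhoffman : ∀ w ∈ W, ∃ wst ∈ Wstar,
      ‖w - wst‖ ^ 2 ≤ θ ^ 2 * (‖A w - rstar‖ ^ 2 + (⟪q, w⟫ - sstar) ^ 2))
    (M : ℝ) (hM : 0 < M) (hMb : ∀ w ∈ W, f w - fstar ≤ M)
    (proj : EuclideanSpace ℝ (Fin d) → EuclideanSpace ℝ (Fin d))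
    (hproj : ∀ w, proj w ∈ Wstar ∧ ∀ u ∈ Wstar, ‖w - proj w‖ ≤ ‖w - u‖)
    (β : ℝ) (hβ : β = 1 / (θ ^ 2 * ((1 + 2 * ‖gradient h rstar‖ ^ 2) / μ + M))) :
    ∀ w ∈ W, f w - fstar ≥ β / 2 * ‖w - proj w‖ ^ 2 :=
  stmt_10_general d n h hdiff A q f hf W hWconv rstar sstar fstar Wstar hWstar hopt μ hμ hsc θ
    hhoffman M hMb proj hproj β hβ
end

section
/- In the same setting, with q = ∇f(w̄) − Xᵀ∇h(r*) and s* = qᵀ w̄, for any w ∈ W: (qᵀw − s*)² ≤ 2(f(w) − f*)² + 2‖∇h(r*)‖² ‖Xw − r*‖². -/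
open RealInnerProductSpace

/-- With `q = ∇f(w̄) − Aᵀ∇h(r*)` and `s* = ⟨q, w̄⟩`, for any `w ∈ W`:
`(⟨q,w⟩ − s*)² ≤ 2(f(w) − f*)² + 2‖∇h(r*)‖² ‖Aw − r*‖²`. -/
theorem stmt_12 (d n : ℕ)
    (h : EuclideanSpace ℝ (Fin n) → ℝ) (hdiff : Differentiable ℝ h)
    (A : EuclideanSpace ℝ (Fin d) →L[ℝ] EuclideanSpace ℝ (Fin n))
    (q : EuclideanSpace ℝ (Fin d))
    (f : EuclideanSpace ℝ (Fin d) → ℝ)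
    (hf : ∀ u, f u = h (A u) + ⟪q, u⟫)
    (w wbar : EuclideanSpace ℝ (Fin d))
    (rstar : EuclideanSpace ℝ (Fin n)) (sstar fstar : ℝ)
    (hr : A wbar = rstar) (hfstar : fstar = f wbar)
    (hq : q = gradient f wbar - ContinuousLinearMap.adjoint A (gradient h rstar))
    (hs : sstar = ⟪q, wbar⟫)
    (hfo : 0 ≤ ⟪gradient f wbar, w - wbar⟫)
    (hub : ⟪gradient f wbar, w - wbar⟫ ≤ f w - fstar) :
    (⟪q, w⟫ - sstar) ^ 2
      ≤ 2 * (f w - fstar) ^ 2 + 2 * ‖gradient h rstar‖ ^ 2 * ‖A w - rstar‖ ^ 2 := by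
  set g := gradient f wbar
  set v := gradient h rstar
  have key : ⟪q, w⟫ - sstar = ⟪g, w - wbar⟫ - ⟪v, A w - rstar⟫ := by
    rw [hs, hq]
    have hadj : ∀ u, ⟪ContinuousLinearMap.adjoint A v, u⟫ = ⟪v, A u⟫ := by
      intro u; rw [ContinuousLinearMap.adjoint_inner_left]
    rw [← hr]
    simp only [inner_sub_left, inner_sub_right, hadj, map_sub]
    ring
  rw [key]
  have hb : |⟪v, A w - rstar⟫| ≤ ‖v‖ * ‖A w - rstar‖ := abs_real_inner_le_norm v _
  have hb2 : ⟪v, A w - rstar⟫ ^ 2 ≤ ‖v‖ ^ 2 * ‖A w - rstar‖ ^ 2 := by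
    have := sq_abs ⟪v, A w - rstar⟫
    nlinarith [abs_nonneg ⟪v, A w - rstar⟫, norm_nonneg v, norm_nonneg (A w - rstar)]
  nlinarith [sq_nonneg (⟪g, w - wbar⟫ + ⟪v, A w - rstar⟫)]
end

section
/- Semi-strong convexity transfers from the epigraph-constrained problem to the regularized problem: if F̃(w, ϖ) − F̃* ≥ (β/2)‖(w, ϖ) − Π_{W̃*}((w, ϖ))‖² holds for all (w, ϖ) in the epigraph of r, and Π_{W̃*}((w, r(w))) = (Π_{W*_r}(w), s̃*), then F(w) − F* ≥ (β/2)‖w − Π_{W*_r}(w)‖² for all w. -/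
/-- Semi-strong convexity transfers from the epigraph-constrained problem to the
regularized problem: if `F̃(w,ϖ) − F̃* ≥ (β/2)‖(w,ϖ) − Π_{W̃*}(w,ϖ)‖²` on the epigraph of `r`
and `Π_{W̃*}(w, r(w)) = (Π_{W*_r}(w), s̃*)`, then `F(w) − F* ≥ (β/2)‖w − Π_{W*_r}(w)‖²`. -/
theorem stmt_15 (d : ℕ) (f r : EuclideanSpace ℝ (Fin d) → ℝ)
    (β Fstar sstar : ℝ) (hβ : 0 < β)
    (projr : EuclideanSpace ℝ (Fin d) → EuclideanSpace ℝ (Fin d))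
    (projt : WithLp 2 (EuclideanSpace ℝ (Fin d) × ℝ) →
      WithLp 2 (EuclideanSpace ℝ (Fin d) × ℝ))
    (hssc : ∀ (w : EuclideanSpace ℝ (Fin d)) (ϖ : ℝ), r w ≤ ϖ →
      (f w + ϖ) - Fstar ≥ β / 2 *
        ‖(WithLp.equiv 2 (EuclideanSpace ℝ (Fin d) × ℝ)).symm (w, ϖ)
          - projt ((WithLp.equiv 2 (EuclideanSpace ℝ (Fin d) × ℝ)).symm (w, ϖ))‖ ^ 2)
    (hproj : ∀ w : EuclideanSpace ℝ (Fin d),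
      projt ((WithLp.equiv 2 (EuclideanSpace ℝ (Fin d) × ℝ)).symm (w, r w))
        = (WithLp.equiv 2 (EuclideanSpace ℝ (Fin d) × ℝ)).symm (projr w, sstar)) :
    ∀ w : EuclideanSpace ℝ (Fin d),
      (f w + r w) - Fstar ≥ β / 2 * ‖w - projr w‖ ^ 2 := by
  intro w
  have h := hssc w (r w) le_rfl
  rw [hproj w] at h
  refine le_trans ?_ h
  apply mul_le_mul_of_nonneg_left _ (by positivity)
  set x := (WithLp.equiv 2 (EuclideanSpace ℝ (Fin d) × ℝ)).symm (w, r w)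
        - (WithLp.equiv 2 (EuclideanSpace ℝ (Fin d) × ℝ)).symm (projr w, sstar) with hx
  have hsq := WithLp.prod_norm_sq_eq_of_L2 x
  have hfst : x.fst = w - projr w := rfl
  rw [hsq, hfst]
  nlinarith [sq_nonneg ‖x.snd‖]
end

section
/- Descent-type bound for projected steps: Let f be convex differentiable with L-Lipschitz gradient, W ⊆ ℝ^d closed convex, 0 < η ≤ 1/L, v ∈ ℝ^d, w⁻ ∈ W, w⁺ = Π_W(w⁻ − ηv), g = (w⁻ − w⁺)/η, δ = ∇f(w⁻) − v. Then for any w* ∈ W: ⟨w* − w⁻, g⟩ + (η/2)‖g‖² ≤ f(w*) − f(w⁺) − ⟨w* − w⁺, δ⟩. -/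
/-!
Put `g = w⁻ − w⁺`. The projection inequality at `w*` reads `⟪g, w* − w⁺⟫ ≤ η ⟪v, w* − w⁺⟫`, and
since `⟪g, w* − w⁺⟫ = ⟪w* − w⁻, g⟫ + ‖g‖²` it bounds the left-hand side by
`⟪v, w* − w⁺⟫ − ‖g‖² / (2η)`. On the other side, the supporting hyperplane of the convex `f` at
`w⁻`, evaluated at `w*`, together with the descent lemma `f w⁺ ≤ f w⁻ + ⟪∇f w⁻, w⁺ − w⁻⟫ + L/2 ‖g‖²`
gives `f w⁺ + ⟪∇f w⁻, w* − w⁺⟫ ≤ f w* + L/2 ‖g‖²`. The two bounds meet because `L ≤ 1/η`.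
-/

open RealInnerProductSpace

section SmoothConvex

variable {E : Type*} [NormedAddCommGroup E] [InnerProductSpace ℝ E] [CompleteSpace E]
  {f : E → ℝ}

theorem DifferentiableAt.hasDerivAt_comp_add_smul {x u : E} {t : ℝ}
    (hf : DifferentiableAt ℝ f (x + t • u)) :
    HasDerivAt (fun s : ℝ => f (x + s • u)) ⟪gradient f (x + t • u), u⟫ t := by
  have hline : HasDerivAt (fun s : ℝ => x + s • u) u t := by
    simpa using ((hasDerivAt_id t).smul_const u).const_add x
  exact hf.hasGradientAt.hasFDerivAt.comp_hasDerivAt t hline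

theorem ConvexOn.add_inner_gradient_le (hconv : ConvexOn ℝ Set.univ f) {x : E}
    (hf : DifferentiableAt ℝ f x) (y : E) :
    f x + ⟪gradient f x, y - x⟫ ≤ f y := by
  have hline : ConvexOn ℝ Set.univ (fun s : ℝ => f (x + s • (y - x))) := by
    have hcomp : (fun s : ℝ => f (x + s • (y - x))) = f ∘ AffineMap.lineMap x y := by
      ext s
      rw [Function.comp_apply, AffineMap.lineMap_apply_module', add_comm]
    exact hcomp ▸ hconv.comp_affineMap (AffineMap.lineMap x y)
  have hderiv := DifferentiableAt.hasDerivAt_comp_add_smul (u := y - x) (t := 0)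
    (by simpa using hf)
  have := hline.le_slope_of_hasDerivAt (Set.mem_univ 0) (Set.mem_univ 1) one_pos hderiv
  simp only [zero_smul, add_zero, slope_def_field, one_smul, add_sub_cancel, sub_zero,
    div_one] at this
  linarith

theorem le_add_inner_gradient_add_sq_of_lipschitz_gradient (hf : Differentiable ℝ f) {L : ℝ}
    (hlip : ∀ x y, ‖gradient f x - gradient f y‖ ≤ L * ‖x - y‖) (x y : E) :
    f y ≤ f x + ⟪gradient f x, y - x⟫ + L / 2 * ‖y - x‖ ^ 2 := by
  set u := y - x
  -- compare `t ↦ f (x + t • u)` on `[0, 1]` with its quadratic model through `t = 0`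
  have hφ (t : ℝ) := (hf (x + t • u)).hasDerivAt_comp_add_smul
  have hB (t : ℝ) :
      HasDerivAt (fun s : ℝ => f x + s * ⟪gradient f x, u⟫ + L / 2 * ‖u‖ ^ 2 * s ^ 2)
        (⟪gradient f x, u⟫ + L * ‖u‖ ^ 2 * t) t := by
    refine ((((hasDerivAt_id t).mul_const ⟪gradient f x, u⟫).const_add (f x)).add
      ((hasDerivAt_pow 2 t).const_mul (L / 2 * ‖u‖ ^ 2))).congr_deriv ?_
    push_cast; ring
  have hbound (t : ℝ) (ht : 0 ≤ t) :
      ⟪gradient f (x + t • u), u⟫ ≤ ⟪gradient f x, u⟫ + L * ‖u‖ ^ 2 * t := by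
    calc ⟪gradient f (x + t • u), u⟫
        = ⟪gradient f x, u⟫ + ⟪gradient f (x + t • u) - gradient f x, u⟫ := by
          rw [inner_sub_left]; ring
      _ ≤ ⟪gradient f x, u⟫ + ‖gradient f (x + t • u) - gradient f x‖ * ‖u‖ := by
          gcongr; exact real_inner_le_norm _ _
      _ ≤ ⟪gradient f x, u⟫ + L * ‖(x + t • u) - x‖ * ‖u‖ := by
          gcongr; exact hlip _ _
      _ = ⟪gradient f x, u⟫ + L * ‖u‖ ^ 2 * t := by
          rw [add_sub_cancel_left, norm_smul, Real.norm_of_nonneg ht]; ring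
  have := image_le_of_deriv_right_le_deriv_boundary (a := 0) (b := 1)
    (fun t _ => (hφ t).continuousAt.continuousWithinAt) (fun t _ => (hφ t).hasDerivWithinAt)
    (by simp) (fun t _ => (hB t).continuousAt.continuousWithinAt)
    (fun t _ => (hB t).hasDerivWithinAt)
    (fun t ht => hbound t ht.1) (Set.right_mem_Icc.2 zero_le_one)
  simpa [u] using this

theorem ConvexOn.add_inner_gradient_le_add_sq (hconv : ConvexOn ℝ Set.univ f)
    (hf : Differentiable ℝ f) {L : ℝ}
    (hlip : ∀ x y, ‖gradient f x - gradient f y‖ ≤ L * ‖x - y‖) (x y z : E) :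
    f y + ⟪gradient f x, z - y⟫ ≤ f z + L / 2 * ‖y - x‖ ^ 2 := by
  have hdescent := le_add_inner_gradient_add_sq_of_lipschitz_gradient hf hlip x y
  have hsupport := hconv.add_inner_gradient_le (hf x) z
  have hsplit : ⟪gradient f x, z - y⟫ = ⟪gradient f x, z - x⟫ - ⟪gradient f x, y - x⟫ := by
    rw [← inner_sub_right, sub_sub_sub_cancel_right]
  linarith

end SmoothConvex

theorem inner_smul_add_norm_smul_sq_le_of_inner_nonneg {E : Type*} [NormedAddCommGroup E]
    [InnerProductSpace ℝ E] {η : ℝ} (hη : 0 < η) {v a b w : E}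
    (hproj : 0 ≤ ⟪b - (a - η • v), w - b⟫) :
    ⟪w - a, η⁻¹ • (a - b)⟫ + η / 2 * ‖η⁻¹ • (a - b)‖ ^ 2
      ≤ ⟪v, w - b⟫ - η⁻¹ / 2 * ‖a - b‖ ^ 2 := by
  have hsplit : ⟪a - b, w - b⟫ = ⟪w - a, a - b⟫ + ‖a - b‖ ^ 2 := by
    rw [show w - b = (w - a) + (a - b) by abel, inner_add_right, real_inner_comm (w - a),
      real_inner_self_eq_norm_sq]
  have hproj' : ⟪a - b, w - b⟫ ≤ η * ⟪v, w - b⟫ := by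
    rw [show b - (a - η • v) = η • v - (a - b) by abel, inner_sub_left,
      real_inner_smul_left] at hproj
    linarith
  have hscaled : η⁻¹ * ⟪a - b, w - b⟫ ≤ ⟪v, w - b⟫ := by
    calc η⁻¹ * ⟪a - b, w - b⟫ ≤ η⁻¹ * (η * ⟪v, w - b⟫) := by gcongr
      _ = ⟪v, w - b⟫ := by field_simp
  have hnorm : η / 2 * ‖η⁻¹ • (a - b)‖ ^ 2 = η⁻¹ / 2 * ‖a - b‖ ^ 2 := by
    rw [norm_smul, Real.norm_of_nonneg (inv_nonneg.2 hη.le)]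
    field_simp
  rw [real_inner_smul_right, hnorm]
  rw [hsplit, mul_add] at hscaled
  linarith

theorem stmt_16_general (d : ℕ) (f : EuclideanSpace ℝ (Fin d) → ℝ) (L : ℝ)
    (hconv : ConvexOn ℝ Set.univ f) (hdiff : Differentiable ℝ f)
    (hlip : ∀ x y, ‖gradient f x - gradient f y‖ ≤ L * ‖x - y‖)
    (W : Set (EuclideanSpace ℝ (Fin d)))
    (η : ℝ) (hη0 : 0 < η) (hη1 : η ≤ 1 / L)
    (v wm wp : EuclideanSpace ℝ (Fin d))
    (hprojchar : ∀ u ∈ W, ⟪wp - (wm - η • v), u - wp⟫ ≥ 0) :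
    ∀ wstar ∈ W,
      ⟪wstar - wm, (η⁻¹ : ℝ) • (wm - wp)⟫ + η / 2 * ‖(η⁻¹ : ℝ) • (wm - wp)‖ ^ 2
        ≤ f wstar - f wp - ⟪wstar - wp, gradient f wm - v⟫ := by
  intro wstar hwstar
  have hL : 0 < L := one_div_pos.mp (hη0.trans_le hη1)
  have hLη : L ≤ η⁻¹ := by rwa [← one_div, le_one_div hL hη0]
  have hsmooth := hconv.add_inner_gradient_le_add_sq hdiff hlip wm wp wstar
  calc _ ≤ ⟪v, wstar - wp⟫ - η⁻¹ / 2 * ‖wm - wp‖ ^ 2 :=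
        inner_smul_add_norm_smul_sq_le_of_inner_nonneg hη0 (hprojchar wstar hwstar)
    _ ≤ ⟪v, wstar - wp⟫ - L / 2 * ‖wp - wm‖ ^ 2 := by rw [norm_sub_rev]; gcongr
    _ ≤ f wstar - f wp - ⟪wstar - wp, gradient f wm - v⟫ := by
        rw [inner_sub_right (wstar - wp), real_inner_comm (gradient f wm), real_inner_comm v]
        linarith

/-- Descent-type bound for projected steps: for convex differentiable `f` with
`L`-Lipschitz gradient, closed convex `W`, `0 < η ≤ 1/L`, `w⁺ = Π_W(w⁻ − ηv)`,
`g = (w⁻ − w⁺)/η`, `δ = ∇f(w⁻) − v`, and any `w* ∈ W`: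
`⟨w* − w⁻, g⟩ + (η/2)‖g‖² ≤ f(w*) − f(w⁺) − ⟨w* − w⁺, δ⟩`. -/
theorem stmt_16 (d : ℕ) (f : EuclideanSpace ℝ (Fin d) → ℝ) (L : ℝ) (hL : 0 < L)
    (hconv : ConvexOn ℝ Set.univ f) (hdiff : Differentiable ℝ f)
    (hlip : ∀ x y, ‖gradient f x - gradient f y‖ ≤ L * ‖x - y‖)
    (W : Set (EuclideanSpace ℝ (Fin d))) (hWconv : Convex ℝ W) (hWclosed : IsClosed W)
    (η : ℝ) (hη0 : 0 < η) (hη1 : η ≤ 1 / L)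
    (v wm wp : EuclideanSpace ℝ (Fin d)) (hwm : wm ∈ W) (hwp : wp ∈ W)
    (hprojchar : ∀ u ∈ W, ⟪wp - (wm - η • v), u - wp⟫ ≥ 0) :
    ∀ wstar ∈ W,
      ⟪wstar - wm, (η⁻¹ : ℝ) • (wm - wp)⟫ + η / 2 * ‖(η⁻¹ : ℝ) • (wm - wp)‖ ^ 2
        ≤ f wstar - f wp - ⟪wstar - wp, gradient f wm - v⟫ :=
  stmt_16_general d f L hconv hdiff hlip W η hη0 hη1 v wm wp hprojchar
end
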